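/- Let N be a Poisson random variable with mean ξ > 0. Then E[|N − ξ|] = 2·e^{−ξ}·ξ^{⌊ξ⌋+1}/⌊ξ⌋!. -/

import Mathlib

/-!
Write `p n = e^{-ξ} ξⁿ / n!`. Since `E[N - ξ] = 0` and `|x| = x + 2 x⁻`, the mean absolute
deviation is `2 ∑_{n ≤ ⌊ξ⌋} p n (ξ - n)`. The identity `(n + 1) p (n + 1) = ξ p n` makes this
finite sum telescope to `(⌊ξ⌋ + 1) p (⌊ξ⌋ + 1) = ξ p ⌊ξ⌋`.
-/

open Real Finset
open scoped Nat

lemma abs_eq_add_two_nsmul_negPart {α : Type*} [AddCommGroup α] [Lattice α]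
    [IsOrderedAddMonoid α] (a : α) : |a| = a + 2 • a⁻ :=
  calc |a| = a⁺ + a⁻ := (posPart_add_negPart a).symm
    _ = (a⁺ - a⁻) + 2 • a⁻ := by abel
    _ = a + 2 • a⁻ := by rw [posPart_sub_negPart]

noncomputable def poissonWeight (ξ : ℝ) (n : ℕ) : ℝ := exp (-ξ) * ξ ^ n / n !

lemma hasSum_poissonWeight (ξ : ℝ) : HasSum (poissonWeight ξ) 1 := by
  have h := (NormedSpace.expSeries_div_hasSum_exp ξ).mul_left (exp (-ξ))
  rw [← exp_eq_exp_ℝ, ← exp_add, neg_add_cancel, exp_zero] at h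
  unfold poissonWeight
  simpa only [mul_div_assoc] using h

lemma succ_mul_poissonWeight_succ (ξ : ℝ) (n : ℕ) :
    (n + 1 : ℝ) * poissonWeight ξ (n + 1) = ξ * poissonWeight ξ n := by
  have : (n ! : ℝ) ≠ 0 := by positivity
  rw [poissonWeight, poissonWeight, Nat.factorial_succ, Nat.cast_mul, Nat.cast_succ, pow_succ]
  field_simp

lemma hasSum_mul_poissonWeight (ξ : ℝ) :
    HasSum (fun n : ℕ ↦ (n : ℝ) * poissonWeight ξ n) ξ := by
  have hshift : HasSum (fun n : ℕ ↦ ((n + 1 : ℕ) : ℝ) * poissonWeight ξ (n + 1)) ξ := by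
    simpa only [Nat.cast_succ, succ_mul_poissonWeight_succ, mul_one] using
      (hasSum_poissonWeight ξ).mul_left ξ
  simpa using HasSum.zero_add (f := fun n : ℕ ↦ (n : ℝ) * poissonWeight ξ n) hshift

lemma hasSum_poissonWeight_mul_sub (ξ : ℝ) :
    HasSum (fun n : ℕ ↦ poissonWeight ξ n * (n - ξ)) 0 := by
  have h := (hasSum_mul_poissonWeight ξ).sub ((hasSum_poissonWeight ξ).mul_left ξ)
  rw [mul_one, sub_self] at h
  exact h.congr_fun fun n ↦ by ring

lemma sum_range_poissonWeight_mul_sub (ξ : ℝ) (k : ℕ) :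
    ∑ n ∈ range k, poissonWeight ξ n * (ξ - n) = k * poissonWeight ξ k := by
  induction k with
  | zero => simp
  | succ k ih =>
    rw [sum_range_succ, ih, Nat.cast_succ, succ_mul_poissonWeight_succ]
    ring

lemma hasSum_poissonWeight_mul_negPart {ξ : ℝ} (hξ : 0 ≤ ξ) :
    HasSum (fun n : ℕ ↦ poissonWeight ξ n * ((n : ℝ) - ξ)⁻) (ξ * poissonWeight ξ ⌊ξ⌋₊) := by
  have hsum : HasSum (fun n : ℕ ↦ poissonWeight ξ n * ((n : ℝ) - ξ)⁻)
      (∑ n ∈ range (⌊ξ⌋₊ + 1), poissonWeight ξ n * ((n : ℝ) - ξ)⁻) :=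
    hasSum_sum_of_ne_finset_zero fun n hn ↦ by
      rw [mem_range, not_lt, Nat.succ_le_iff, Nat.floor_lt hξ] at hn
      rw [negPart_eq_zero.2 (by linarith), mul_zero]
  convert hsum using 1
  rw [← succ_mul_poissonWeight_succ, ← Nat.cast_succ, ← sum_range_poissonWeight_mul_sub]
  refine sum_congr rfl fun n hn ↦ ?_
  rw [mem_range, Nat.lt_succ_iff, Nat.le_floor_iff hξ] at hn
  rw [negPart_def, neg_sub, max_eq_left (by linarith)]

/-- For `N ~ Poisson(ξ)` with `ξ > 0`,
`E[|N − ξ|] = 2·e^{−ξ}·ξ^{⌊ξ⌋+1}/⌊ξ⌋!`, the expectation written out as the series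
`∑ₙ e^{−ξ} ξⁿ/n! · |n − ξ|`. -/
theorem poisson_abs_mean_deviation_eq (ξ : ℝ) (hξ : 0 < ξ) :
    ∑' n : ℕ, (Real.exp (-ξ) * ξ ^ n / n.factorial) * |(n : ℝ) - ξ|
      = 2 * Real.exp (-ξ) * ξ ^ (⌊ξ⌋₊ + 1) / (⌊ξ⌋₊).factorial := by
  have hsum : HasSum (fun n : ℕ ↦ poissonWeight ξ n * |(n : ℝ) - ξ|)
      (0 + 2 * (ξ * poissonWeight ξ ⌊ξ⌋₊)) := by
    simpa only [abs_eq_add_two_nsmul_negPart, nsmul_eq_mul, Nat.cast_ofNat, mul_add,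
      mul_left_comm] using
      (hasSum_poissonWeight_mul_sub ξ).add ((hasSum_poissonWeight_mul_negPart hξ.le).mul_left 2)
  exact hsum.tsum_eq.trans (by rw [poissonWeight, pow_succ]; ring)
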